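/- arXiv:1107.4893 — 6 statements merged into one kernel-verified Lean document; each statement's English description precedes it below -/
import Mathlib

section
/- The trivial solution to Minimum-Power Edge-Multi-Cover, obtained by picking for every node v the r(v) cheapest edges incident to v, has power at most (k+1)·opt, where k = max_v r(v) and opt is the minimum power of an r-edge cover. -/
open Finset

variable {V : Type*} [Fintype V] [DecidableEq V]

/-- The set of edges of `J` incident to the node `v`. -/
def inc (J : Finset (Sym2 V)) (v : V) : Finset (Sym2 V) := J.filter (fun e => v ∈ e)

/-- The power of the node `v` w.r.t. the edge set `J`:
the maximum cost of an edge of `J` incident to `v` (`0` if `v` is isolated). -/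
def pw (c : Sym2 V → NNReal) (J : Finset (Sym2 V)) (v : V) : NNReal := (inc J v).sup c

/-- The degree of the node `v` in the graph `(V, J)`. -/
def deg (J : Finset (Sym2 V)) (v : V) : ℕ := (inc J v).card

lemma mem3 {e : Sym2 V} {a b x : V} (ha : a ∈ e) (hb : b ∈ e) (hx : x ∈ e)
    (hax : a ≠ x) (hbx : b ≠ x) : a = b := by
  induction e using Sym2.ind with
  | _ p q =>
    simp only [Sym2.mem_iff] at ha hb hx
    rcases ha with rfl | rfl <;> rcases hb with rfl | rfl <;> rcases hx with rfl | rfl <;> tauto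

/-- The trivial solution (picking for every node `v` the `r v` cheapest incident edges)
has power at most `(k+1)·opt`, i.e. at most `(k+1)` times the power of any `r`-edge cover. -/
theorem stmt2 (E : Finset (Sym2 V)) (c : Sym2 V → NNReal) (r : V → ℕ)
    (k : ℕ) (hk : k = Finset.univ.sup r)
    (hdeg : ∀ v, r v ≤ deg E v)
    (S : V → Finset (Sym2 V))
    (hSsub : ∀ v, S v ⊆ inc E v)
    (hScard : ∀ v, (S v).card = r v)
    (hScheap : ∀ v, ∀ e ∈ S v, ∀ f ∈ inc E v \ S v, c e ≤ c f)
    (J : Finset (Sym2 V)) (hJ : J = Finset.univ.biUnion S) :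
    ∀ I ⊆ E, (∀ v, r v ≤ deg I v) →
      ∑ v, pw c J v ≤ ((k : NNReal) + 1) * ∑ v, pw c I v := by
  intro I hIE hI
  classical
  -- every edge chosen at u is at most the power of I at u
  have star : ∀ u : V, ∀ e ∈ S u, c e ≤ pw c I u := by
    intro u e he
    by_contra h
    push_neg at h
    have hsub : inc I u ⊆ (S u).erase e := by
      intro f hf
      have hfI : f ∈ I := (mem_filter.mp hf).1
      have hfu : u ∈ f := (mem_filter.mp hf).2
      have hfle : c f ≤ pw c I u := le_sup hf
      have hfS : f ∈ S u := by
        by_contra hfS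
        have hmem : f ∈ inc E u \ S u :=
          mem_sdiff.mpr ⟨mem_filter.mpr ⟨hIE hfI, hfu⟩, hfS⟩
        exact absurd ((hScheap u e he f hmem).trans hfle) (not_le.mpr h)
      refine mem_erase.mpr ⟨?_, hfS⟩
      rintro rfl
      exact absurd hfle (not_le.mpr h)
    have h1 : deg I u ≤ r u - 1 := by
      have := card_le_card hsub
      rwa [card_erase_of_mem he, hScard u] at this
    have h2 : 1 ≤ r u := (hScard u) ▸ card_pos.mpr ⟨e, he⟩
    have h3 := hI u
    omega
  -- choose for each v a witness node and edge
  have A : ∀ v : V, ∃ u : V, ∃ e : Sym2 V,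
      (v = u ∨ (e ∈ S u ∧ v ∈ e)) ∧ pw c J v ≤ pw c I u := by
    intro v
    rcases (inc J v).eq_empty_or_nonempty with hne | hne
    · exact ⟨v, s(v, v), Or.inl rfl, by simp [pw, hne]⟩
    · obtain ⟨e, heJ, hce⟩ := Finset.exists_mem_eq_sup _ hne c
      have heJ' : e ∈ J := (mem_filter.mp heJ).1
      have hve : v ∈ e := (mem_filter.mp heJ).2
      rw [hJ] at heJ'
      obtain ⟨u, -, heu⟩ := mem_biUnion.mp heJ'
      refine ⟨u, e, Or.inr ⟨heu, hve⟩, ?_⟩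
      rw [pw, hce]
      exact star u e heu
  choose g ε hA hle using A
  -- fibers of g have size at most k + 1
  have fib : ∀ u : V, (univ.filter (fun v => g v = u)).card ≤ k + 1 := by
    intro u
    set s := univ.filter (fun v => g v = u) with hs
    have hright : ∀ v ∈ s.erase u, ε v ∈ S u ∧ v ∈ ε v := by
      intro v hv
      have hvne : v ≠ u := (mem_erase.mp hv).1
      have hgv : g v = u := (mem_filter.mp (mem_erase.mp hv).2).2
      rcases hA v with h | h
      · exact absurd (h.trans hgv) hvne
      · rw [hgv] at h; exact h
    have hcard : (s.erase u).card ≤ (S u).card := by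
      apply Finset.card_le_card_of_injOn ε (fun v hv => (hright v hv).1)
      intro v hv w hw hvw
      have hv' := hright v (Finset.mem_coe.mp hv)
      have hw' := hright w (Finset.mem_coe.mp hw)
      have hu : u ∈ ε v := by
        have := hSsub u hv'.1
        exact (mem_filter.mp this).2
      have hvne : v ≠ u := (mem_erase.mp (Finset.mem_coe.mp hv)).1
      have hwne : w ≠ u := (mem_erase.mp (Finset.mem_coe.mp hw)).1
      exact mem3 hv'.2 (hvw ▸ hw'.2) hu hvne hwne
    have hru : r u ≤ k := by
      rw [hk]; exact Finset.le_sup (mem_univ u)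
    have hins : s ⊆ insert u (s.erase u) := by
      intro x hx
      by_cases hxu : x = u
      · simp [hxu]
      · exact mem_insert_of_mem (mem_erase.mpr ⟨hxu, hx⟩)
    calc s.card ≤ (insert u (s.erase u)).card := card_le_card hins
      _ ≤ (s.erase u).card + 1 := card_insert_le _ _
      _ ≤ (S u).card + 1 := by omega
      _ ≤ k + 1 := by rw [hScard u]; omega
  calc ∑ v, pw c J v ≤ ∑ v, pw c I (g v) := Finset.sum_le_sum (fun v _ => hle v)
    _ = ∑ u ∈ univ.image g, (univ.filter (fun v => g v = u)).card • pw c I u :=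
        Finset.sum_comp (pw c I) g
    _ ≤ ∑ u, (univ.filter (fun v => g v = u)).card • pw c I u :=
        Finset.sum_le_sum_of_subset (subset_univ _)
    _ ≤ ∑ u, (k + 1) • pw c I u :=
        Finset.sum_le_sum (fun u _ => by
          rw [nsmul_eq_mul, nsmul_eq_mul]
          exact mul_le_mul_left (by exact_mod_cast fib u) _)
    _ = ((k : NNReal) + 1) * ∑ u, pw c I u := by
        rw [Finset.mul_sum]
        refine Finset.sum_congr rfl (fun u _ => ?_)
        rw [nsmul_eq_mul]
        push_cast
        ring
end

section
/- In the bipartite MPEMC setting, let J ⊆ E and let F be obtained by picking, for each b ∈ B, r_J(b) = max{r(b) − d_J(b), 0} cheapest edges of E∖J incident to b. Then J∪F is an r-edge cover, p_F(B) ≤ opt, and p_F(A) ≤ R_J where R_J = ∑_{b∈B} w_b · r_J(b). Moreover R_J ≤ k·opt where k = max_b r(b). -/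
open Finset

variable {V : Type*} [Fintype V] [DecidableEq V]

/-!
Every edge has exactly one endpoint in `B`, so `F` is the disjoint union of the stars `SF b`,
and `inc F b = SF b`. At least `r b - d_J(b)` edges of any `r b`-subset `T` of the edges at `b`
lie outside `J`, so either they are all in `SF b` or one of them is a non-chosen edge of `E \ J`;
in both cases the chosen edges are no more expensive than `max c(T)`. Hence
`p_F(b) ≤ w b ≤ p_I(b)` for every `r`-edge cover `I ⊆ E`. Since every edge has at most one
endpoint in `A`, `p_F(A)` is at most the total cost of `F`, which is at most
`∑ b, w b * r_J(b)`; finally `r_J(b) ≤ k` and `w b ≤ p_I(b)`.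
-/

def AtMostOneEndpointIn {α : Type*} (X : Finset α) (F : Finset (Sym2 α)) : Prop :=
  ∀ e ∈ F, ∀ x ∈ X, ∀ y ∈ X, x ∈ e → y ∈ e → x = y

section

variable {α : Type*} {X : Finset α} {E F : Finset (Sym2 α)}

theorem atMostOneEndpointIn_of_forall_eq_mk (h : ∀ e ∈ E, ∃ a b, a ∉ X ∧ e = s(a, b)) :
    AtMostOneEndpointIn X E := by
  intro e he x hx y hy hxe hye
  obtain ⟨a, b, ha, rfl⟩ := h e he
  have eq_right : ∀ z ∈ X, z ∈ s(a, b) → z = b := fun z hz hze =>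
    (Sym2.mem_iff.mp hze).resolve_left fun hza => ha (hza ▸ hz)
  rw [eq_right x hx hxe, eq_right y hy hye]

theorem atMostOneEndpointIn_of_bipartite {A B : Finset α} (hdisj : Disjoint A B)
    (hbip : ∀ e ∈ E, ∃ a ∈ A, ∃ b ∈ B, e = s(a, b)) :
    AtMostOneEndpointIn A E ∧ AtMostOneEndpointIn B E := by
  refine ⟨atMostOneEndpointIn_of_forall_eq_mk fun e he => ?_,
    atMostOneEndpointIn_of_forall_eq_mk fun e he => ?_⟩ <;> obtain ⟨a, ha, b, hb, rfl⟩ := hbip e he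
  · exact ⟨b, a, disjoint_right.mp hdisj hb, Sym2.eq_swap⟩
  · exact ⟨a, b, disjoint_left.mp hdisj ha, rfl⟩

theorem AtMostOneEndpointIn.mono (hE : AtMostOneEndpointIn X E) (hF : F ⊆ E) :
    AtMostOneEndpointIn X F :=
  fun e he => hE e (hF he)

variable [DecidableEq α]

theorem AtMostOneEndpointIn.pairwiseDisjoint_inc (hE : AtMostOneEndpointIn X E) :
    (X : Set α).PairwiseDisjoint (inc E) := by
  intro x hx y hy hxy
  refine disjoint_left.mpr fun e hex hey => hxy ?_
  simp only [inc, mem_filter] at hex hey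
  exact hE e hex.1 x hx y hy hex.2 hey.2

theorem AtMostOneEndpointIn.inc_biUnion {S : α → Finset (Sym2 α)}
    (hE : AtMostOneEndpointIn X E) (hS : ∀ x ∈ X, S x ⊆ inc E x) {x : α} (hx : x ∈ X) :
    inc (X.biUnion S) x = S x := by
  ext e
  simp only [inc, mem_filter, mem_biUnion]
  constructor
  · rintro ⟨⟨y, hy, hey⟩, hxe⟩
    have hye := mem_filter.mp (hS y hy hey)
    rwa [hE e hye.1 x hx y hy hxe hye.2]
  · intro hex
    exact ⟨⟨x, hx, hex⟩, (mem_filter.mp (hS x hx hex)).2⟩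

theorem AtMostOneEndpointIn.sum_pw_le (hF : AtMostOneEndpointIn X F) (c : Sym2 α → NNReal) :
    ∑ x ∈ X, pw c F x ≤ ∑ e ∈ F, c e :=
  calc ∑ x ∈ X, pw c F x ≤ ∑ x ∈ X, ∑ e ∈ inc F x, c e :=
        sum_le_sum fun _ _ => Finset.sup_le fun _ he => single_le_sum (fun _ _ => zero_le) he
    _ = ∑ e ∈ X.biUnion (inc F), c e := (sum_biUnion hF.pairwiseDisjoint_inc).symm
    _ ≤ ∑ e ∈ F, c e := sum_le_sum_of_subset (biUnion_subset.mpr fun _ _ => filter_subset _ _)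

end

theorem sup_le_sup_of_cheapest {α β : Type*} [DecidableEq α] [LinearOrder β] [OrderBot β] {c : α → β}
    {X S T : Finset α} (hcheap : ∀ e ∈ S, ∀ f ∈ X \ S, c e ≤ c f)
    (hTX : T ⊆ X) (hcard : #S ≤ #T) : S.sup c ≤ T.sup c := by
  by_cases hTS : T ⊆ S
  · rw [eq_of_subset_of_card_le hTS hcard]
  · obtain ⟨f, hfT, hfS⟩ := not_subset.mp hTS
    exact Finset.sup_le fun e he => (hcheap e he f (mem_sdiff.mpr ⟨hTX hfT, hfS⟩)).trans (le_sup hfT)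

section

variable {α β : Type*} [DecidableEq α] [LinearOrder β] [OrderBot β] {c : Sym2 α → β}
  {E J S : Finset (Sym2 α)} {v : α} {n : ℕ}

theorem sup_le_sup_of_cheapest_inc_sdiff (hcard : #S ≤ n - deg J v)
    (hcheap : ∀ e ∈ S, ∀ f ∈ inc (E \ J) v \ S, c e ≤ c f)
    {T : Finset (Sym2 α)} (hT : T ⊆ inc E v) (hTcard : #T = n) : S.sup c ≤ T.sup c := by
  have hTJ : #(T ∩ J) ≤ deg J v := card_le_card fun e he =>
    mem_filter.mpr ⟨(mem_inter.mp he).2, (mem_filter.mp (hT (mem_inter.mp he).1)).2⟩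
  have hTsdiff : T \ J ⊆ inc (E \ J) v := fun e he => by
    obtain ⟨heT, heJ⟩ := mem_sdiff.mp he
    have := mem_filter.mp (hT heT)
    exact mem_filter.mpr ⟨mem_sdiff.mpr ⟨this.1, heJ⟩, this.2⟩
  have := card_sdiff_add_card_inter T J
  exact (sup_le_sup_of_cheapest hcheap hTsdiff (by omega)).trans (sup_mono sdiff_subset)

theorem sup_le_inf'_powersetCard_of_cheapest (hcard : #S ≤ n - deg J v)
    (hcheap : ∀ e ∈ S, ∀ f ∈ inc (E \ J) v \ S, c e ≤ c f)
    (hne : ((inc E v).powersetCard n).Nonempty) :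
    S.sup c ≤ ((inc E v).powersetCard n).inf' hne (fun T => T.sup c) :=
  le_inf' _ _ fun _ hT =>
    sup_le_sup_of_cheapest_inc_sdiff hcard hcheap (mem_powersetCard.mp hT).1
      (mem_powersetCard.mp hT).2

theorem le_deg_union_of_subset_inc_sdiff {F : Finset (Sym2 α)} (hS : S ⊆ inc (E \ J) v)
    (hcard : #S = n - deg J v) (hSF : S ⊆ F) : n ≤ deg (J ∪ F) v := by
  have hdisj : Disjoint (inc J v) S := disjoint_left.mpr fun e heJ heS =>
    (mem_sdiff.mp (mem_filter.mp (hS heS)).1).2 (mem_filter.mp heJ).1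
  have hsub : inc J v ∪ S ⊆ inc (J ∪ F) v :=
    union_subset (filter_subset_filter _ subset_union_left)
      fun e he => mem_filter.mpr ⟨mem_union_right _ (hSF he), (mem_filter.mp (hS he)).2⟩
  have := card_le_card hsub
  rw [card_union_of_disjoint hdisj] at this
  unfold deg at *
  omega

end

theorem inf'_powersetCard_le_pw {α : Type*} [DecidableEq α] {c : Sym2 α → NNReal}
    {E I : Finset (Sym2 α)} {v : α} {n : ℕ} (hI : I ⊆ E) (hn : n ≤ deg I v)
    (hne : ((inc E v).powersetCard n).Nonempty) :
    ((inc E v).powersetCard n).inf' hne (fun T => T.sup c) ≤ pw c I v := by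
  obtain ⟨T, hTI, hTcard⟩ := exists_subset_card_eq hn
  exact (inf'_le _ (mem_powersetCard.mpr ⟨hTI.trans (filter_subset_filter _ hI), hTcard⟩)).trans
    (sup_mono hTI)

theorem sum_biUnion_le_sum_mul_card {ι α : Type*} [DecidableEq α] {B : Finset ι}
    {S : ι → Finset α} {c : α → NNReal} {w : ι → NNReal}
    (hS : (B : Set ι).PairwiseDisjoint S) (hc : ∀ b ∈ B, ∀ e ∈ S b, c e ≤ w b) :
    ∑ e ∈ B.biUnion S, c e ≤ ∑ b ∈ B, w b * #(S b) := by
  rw [sum_biUnion hS]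
  refine sum_le_sum fun b hb => ?_
  rw [mul_comm, ← nsmul_eq_mul]
  exact sum_le_card_nsmul _ _ _ (hc b hb)

theorem sum_mul_le_mul_sum {ι : Type*} [Fintype ι] {B : Finset ι} {w p m : ι → NNReal} {k : NNReal}
    (hw : ∀ b ∈ B, w b ≤ p b) (hm : ∀ b ∈ B, m b ≤ k) :
    ∑ b ∈ B, w b * m b ≤ k * ∑ i, p i :=
  calc ∑ b ∈ B, w b * m b ≤ ∑ b ∈ B, k * p b :=
        sum_le_sum fun b hb => (mul_le_mul' (hw b hb) (hm b hb)).trans_eq (mul_comm _ _)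
    _ = k * ∑ b ∈ B, p b := (mul_sum _ _ _).symm
    _ ≤ k * ∑ i, p i := by gcongr; exact subset_univ B

theorem stmt4_general (A B : Finset V) (hdisj : Disjoint A B)
    (E : Finset (Sym2 V)) (c : Sym2 V → NNReal)
    (hbip : ∀ e ∈ E, ∃ a ∈ A, ∃ b ∈ B, e = s(a, b))
    (r : V → ℕ)
    (k : ℕ) (hk : k = Finset.univ.sup r)
    (w : V → NNReal)
    (hne : ∀ b ∈ B, ((inc E b).powersetCard (r b)).Nonempty)
    (hw : ∀ b, ∀ hb : b ∈ B,
      w b = ((inc E b).powersetCard (r b)).inf' (hne b hb) (fun T => T.sup c))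
    (J : Finset (Sym2 V))
    (SF : V → Finset (Sym2 V))
    (hSsub : ∀ b ∈ B, SF b ⊆ inc (E \ J) b)
    (hScard : ∀ b ∈ B, (SF b).card = r b - deg J b)
    (hScheap : ∀ b ∈ B, ∀ e ∈ SF b, ∀ f ∈ inc (E \ J) b \ SF b, c e ≤ c f)
    (F : Finset (Sym2 V)) (hF : F = B.biUnion SF) :
    (∀ b ∈ B, r b ≤ deg (J ∪ F) b) ∧
      ∀ I ⊆ E, (∀ b ∈ B, r b ≤ deg I b) →
        (∑ b ∈ B, pw c F b ≤ ∑ v, pw c I v) ∧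
        (∑ a ∈ A, pw c F a ≤ ∑ b ∈ B, w b * ((r b - deg J b : ℕ) : NNReal)) ∧
        ∑ b ∈ B, w b * ((r b - deg J b : ℕ) : NNReal) ≤ (k : NNReal) * ∑ v, pw c I v := by
  obtain ⟨hA, hB⟩ := atMostOneEndpointIn_of_bipartite hdisj hbip
  have hSE : ∀ b ∈ B, SF b ⊆ inc E b := fun b hb =>
    (hSsub b hb).trans (filter_subset_filter _ sdiff_subset)
  have hFE : F ⊆ E := hF ▸ biUnion_subset.mpr fun b hb => (hSE b hb).trans (filter_subset _ _)
  have hSFw : ∀ b ∈ B, (SF b).sup c ≤ w b := fun b hb => (hw b hb).symm ▸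
    sup_le_inf'_powersetCard_of_cheapest (hScard b hb).le (hScheap b hb) _
  refine ⟨fun b hb => le_deg_union_of_subset_inc_sdiff (hSsub b hb) (hScard b hb)
    (hF ▸ subset_biUnion_of_mem SF hb), fun I hIE hI => ?_⟩
  have hwI : ∀ b ∈ B, w b ≤ pw c I b := fun b hb =>
    (hw b hb).symm ▸ inf'_powersetCard_le_pw hIE (hI b hb) _
  refine ⟨?_, ?_, ?_⟩
  · calc ∑ b ∈ B, pw c F b ≤ ∑ b ∈ B, pw c I b := sum_le_sum fun b hb => by
          rw [pw, hF, hB.inc_biUnion hSE hb]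
          exact (hSFw b hb).trans (hwI b hb)
      _ ≤ ∑ v, pw c I v := sum_le_sum_of_subset (subset_univ B)
  · calc ∑ a ∈ A, pw c F a ≤ ∑ e ∈ F, c e := (hA.mono hFE).sum_pw_le c
      _ ≤ ∑ b ∈ B, w b * #(SF b) := hF ▸ sum_biUnion_le_sum_mul_card
          (hB.pairwiseDisjoint_inc.mono_on hSE) fun b hb e he => (le_sup he).trans (hSFw b hb)
      _ = _ := sum_congr rfl fun b hb => by rw [hScard b hb]
  · exact sum_mul_le_mul_sum hwI fun b _ =>
      Nat.cast_le.mpr ((Nat.sub_le _ _).trans (hk ▸ le_sup (mem_univ b)))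

/-- Bipartite MPEMC: given `J ⊆ E`, let `F` be obtained by picking for each `b ∈ B`
the `r_J(b) = max{r b − d_J(b), 0}` cheapest edges of `E \ J` incident to `b`.
Then `J ∪ F` is an `r`-edge cover, `p_F(B) ≤ opt`, `p_F(A) ≤ R_J`, and `R_J ≤ k·opt`,
where `R_J = ∑_{b∈B} w b · r_J(b)` and `opt` is the power of any `r`-edge cover `I`. -/
theorem stmt4 (A B : Finset V) (hpart : A ∪ B = Finset.univ) (hdisj : Disjoint A B)
    (E : Finset (Sym2 V)) (c : Sym2 V → NNReal)
    (hbip : ∀ e ∈ E, ∃ a ∈ A, ∃ b ∈ B, e = s(a, b))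
    (r : V → ℕ) (hrA : ∀ a ∈ A, r a = 0)
    (k : ℕ) (hk : k = Finset.univ.sup r)
    (w : V → NNReal)
    (hne : ∀ b ∈ B, ((inc E b).powersetCard (r b)).Nonempty)
    (hw : ∀ b, ∀ hb : b ∈ B,
      w b = ((inc E b).powersetCard (r b)).inf' (hne b hb) (fun T => T.sup c))
    (J : Finset (Sym2 V)) (hJE : J ⊆ E)
    (SF : V → Finset (Sym2 V))
    (hSsub : ∀ b ∈ B, SF b ⊆ inc (E \ J) b)
    (hScard : ∀ b ∈ B, (SF b).card = r b - deg J b)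
    (hScheap : ∀ b ∈ B, ∀ e ∈ SF b, ∀ f ∈ inc (E \ J) b \ SF b, c e ≤ c f)
    (F : Finset (Sym2 V)) (hF : F = B.biUnion SF) :
    (∀ b ∈ B, r b ≤ deg (J ∪ F) b) ∧
      ∀ I ⊆ E, (∀ b ∈ B, r b ≤ deg I b) →
        (∑ b ∈ B, pw c F b ≤ ∑ v, pw c I v) ∧
        (∑ a ∈ A, pw c F a ≤ ∑ b ∈ B, w b * ((r b - deg J b : ℕ) : NNReal)) ∧
        ∑ b ∈ B, w b * ((r b - deg J b : ℕ) : NNReal) ≤ (k : NNReal) * ∑ v, pw c I v :=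
  stmt4_general A B hdisj E c hbip r k hk w hne hw J SF hSsub hScard hScheap F hF
end

section
/- Let γ > 1, τ ≥ 0, R = ∑_{b∈B} w_b·r(b) > 0, and let F be an r-edge cover with p_F(B) ≤ τ. Define I as the set of all τ-cheap edges, i.e., edges e incident to b∈B with c(e) ≤ (τγ/R)·w_b·r(b). Then R_{I∩F} ≤ R/γ, where R_{J} = ∑_{b∈B} w_b·max{r(b)−d_J(b),0}. -/
open Finset

variable {V : Type*} [Fintype V] [DecidableEq V]

/-- Let `γ > 1`, `τ ≥ 0`, `R = ∑_{b∈B} w b · r b > 0`, and let `F` be an `r`-edge cover with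
`p_F(B) ≤ τ`. With `I` the set of all `τ`-cheap edges (edges `e` at `b ∈ B` with
`c e ≤ (τγ/R)·w b·r b`), we have `R_{I∩F} ≤ R/γ`, where
`R_J = ∑_{b∈B} w b · max{r b − d_J(b), 0}`. -/
theorem stmt6 (A B : Finset V) (hpart : A ∪ B = Finset.univ) (hdisj : Disjoint A B)
    (E : Finset (Sym2 V)) (c : Sym2 V → NNReal)
    (hbip : ∀ e ∈ E, ∃ a ∈ A, ∃ b ∈ B, e = s(a, b))
    (r : V → ℕ) (hrA : ∀ a ∈ A, r a = 0)
    (w : V → NNReal) (γ τ R : ℝ) (hγ : 1 < γ) (hτ : 0 ≤ τ)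
    (hR : R = ∑ b ∈ B, (w b : ℝ) * (r b : ℝ)) (hRpos : 0 < R)
    (I : Finset (Sym2 V))
    (hI : I = E.filter (fun e =>
      ∃ b ∈ B, b ∈ e ∧ (c e : ℝ) ≤ τ * γ / R * ((w b : ℝ) * (r b : ℝ))))
    (F : Finset (Sym2 V)) (hFE : F ⊆ E)
    (hFcov : ∀ b ∈ B, r b ≤ deg F b)
    (hPF : ∑ b ∈ B, (pw c F b : ℝ) ≤ τ) :
    ∑ b ∈ B, (w b : ℝ) * ((r b - deg (I ∩ F) b : ℕ) : ℝ) ≤ R / γ := by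
  classical
  set D := B.filter (fun b => w b ≠ 0 ∧ deg (I ∩ F) b < r b) with hD
  have hγ0 : (0:ℝ) < γ := by linarith
  have hkey : ∀ b ∈ D, τ * γ / R * ((w b : ℝ) * (r b : ℝ)) < (pw c F b : ℝ) := by
    intro b hb
    rw [hD, Finset.mem_filter] at hb
    obtain ⟨hbB, hw, hd⟩ := hb
    have hsub : inc (I ∩ F) b ⊆ inc F b := by
      intro e he
      simp only [inc, Finset.mem_filter, Finset.mem_inter] at he ⊢
      exact ⟨he.1.2, he.2⟩
    have hcard : (inc (I ∩ F) b).card < (inc F b).card :=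
      lt_of_lt_of_le hd (hFcov b hbB)
    obtain ⟨e, heF, heI⟩ : ∃ e ∈ inc F b, e ∉ inc (I ∩ F) b := by
      by_contra h
      push_neg at h
      exact absurd (Finset.card_le_card h) (not_le.mpr hcard)
    simp only [inc, Finset.mem_filter, Finset.mem_inter] at heF heI
    have heI' : e ∉ I := fun h => heI ⟨⟨h, heF.1⟩, heF.2⟩
    have hcost : ¬ ((c e : ℝ) ≤ τ * γ / R * ((w b : ℝ) * (r b : ℝ))) := by
      intro hle
      exact heI' (hI ▸ Finset.mem_filter.mpr ⟨hFE heF.1, b, hbB, heF.2, hle⟩)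
    have hpw : c e ≤ pw c F b :=
      Finset.le_sup (by simp [inc, Finset.mem_filter, heF.1, heF.2])
    calc τ * γ / R * ((w b : ℝ) * (r b : ℝ)) < (c e : ℝ) := lt_of_not_ge hcost
      _ ≤ (pw c F b : ℝ) := by exact_mod_cast hpw
  have hS : ∑ b ∈ D, (w b : ℝ) * (r b : ℝ) ≤ R / γ := by
    rcases eq_or_lt_of_le hτ with h0 | hτpos
    · have hDe : D = ∅ := by
        rw [Finset.eq_empty_iff_forall_notMem]
        intro b hb
        have h1 := hkey b hb
        have hbB : b ∈ B := by rw [hD, Finset.mem_filter] at hb; exact hb.1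
        have hnn : ∀ x ∈ B, (0:ℝ) ≤ (pw c F x : ℝ) := fun x _ => (pw c F x).coe_nonneg
        have hsz : ∑ b ∈ B, (pw c F b : ℝ) = 0 :=
          le_antisymm (by rw [h0]; exact hPF) (Finset.sum_nonneg hnn)
        have hpw0 : (pw c F b : ℝ) = 0 :=
          (Finset.sum_eq_zero_iff_of_nonneg hnn).mp hsz b hbB
        rw [hpw0, ← h0] at h1
        simp at h1
      rw [hDe]
      simp only [Finset.sum_empty]
      positivity
    · have hsum : τ * γ / R * ∑ b ∈ D, (w b : ℝ) * (r b : ℝ) ≤ τ := by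
        rw [Finset.mul_sum]
        calc ∑ b ∈ D, τ * γ / R * ((w b : ℝ) * (r b : ℝ))
            ≤ ∑ b ∈ D, (pw c F b : ℝ) :=
              Finset.sum_le_sum (fun b hb => le_of_lt (hkey b hb))
          _ ≤ ∑ b ∈ B, (pw c F b : ℝ) :=
              Finset.sum_le_sum_of_subset_of_nonneg
                (by rw [hD]; exact Finset.filter_subset _ _)
                (fun x _ _ => (pw c F x).coe_nonneg)
          _ ≤ τ := hPF
      set S := ∑ b ∈ D, (w b : ℝ) * (r b : ℝ) with hSdef
      rw [div_mul_eq_mul_div, div_le_iff₀ hRpos] at hsum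
      rw [le_div_iff₀ hγ0]
      nlinarith [hsum, hτpos]
  calc ∑ b ∈ B, (w b : ℝ) * ((r b - deg (I ∩ F) b : ℕ) : ℝ)
      = ∑ b ∈ D, (w b : ℝ) * ((r b - deg (I ∩ F) b : ℕ) : ℝ) := by
        rw [hD]
        exact (Finset.sum_filter_of_ne (by
          intro b _ hne
          constructor
          · intro hw; rw [hw] at hne; simp at hne
          · by_contra hle
            push_neg at hle
            rw [Nat.sub_eq_zero_of_le hle] at hne
            simp at hne)).symm
    _ ≤ ∑ b ∈ D, (w b : ℝ) * (r b : ℝ) :=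
        Finset.sum_le_sum (fun b _ => by
          apply mul_le_mul_of_nonneg_left _ (w b).coe_nonneg
          exact_mod_cast Nat.sub_le _ _)
    _ ≤ R / γ := hS
end

section
/- In the reduction of Lemma 6 (from Restricted Min-Power Edge-Cover to Min-Cost Edge-Cover): if I' ⊆ E' is a U-cover in G', I = ⋃_{e'∈I'} I(e'), and π(v) = max{p_I(v), ℓ_v}, then I is a U-cover in G, π is a feasible solution (π(v) ≥ ℓ_v for v ∈ U and every edge uv ∈ I satisfies π(u), π(v) ≥ c(uv)), and π(V) ≤ c'(I'). -/
open Finset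

variable {V : Type*} [Fintype V] [DecidableEq V]

/-!
Write `J = ⋃_{e' ∈ I'} I(e')` and `π(v) = max{p_J(v), ℓ_v} = ℓ_v + (p_J(v) - ℓ_v)⁺`.
The `ℓ`-parts are paid for because every node of `U` is an end of some `e' ∈ I'` and `ℓ`
vanishes off `U`. For the excess parts, `p_J(v) = max_{e'} p_{I(e')}(v)` and `x ↦ (x - ℓ_v)⁺` is
monotone, nonnegative and vanishes at `0`, so `(p_J(v) - ℓ_v)⁺ ≤ ∑_{e'} (p_{I(e')}(v) - ℓ_v)⁺`.
Summing over `v` and regrouping by `e'` gives `π(V) ≤ ∑_{e'} c'(e')`.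
-/

section Power

variable {α : Type*} [DecidableEq α]

lemma le_pw_of_mem (c : Sym2 α → NNReal) {J : Finset (Sym2 α)} {e : Sym2 α} {v : α}
    (he : e ∈ J) (hv : v ∈ e) : c e ≤ pw c J v :=
  le_sup (mem_filter.2 ⟨he, hv⟩)

lemma pw_biUnion {ι : Type*} (c : Sym2 α → NNReal) (s : Finset ι) (t : ι → Finset (Sym2 α))
    (v : α) : pw c (s.biUnion t) v = s.sup fun i => pw c (t i) v := by
  simp only [pw, inc, filter_biUnion, sup_biUnion]

end Power

lemma max_sub_sup_le_sum {ι : Type*} (s : Finset ι) (g : ι → NNReal) {a : ℝ} (ha : 0 ≤ a) :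
    max (((s.sup g : NNReal) : ℝ) - a) 0 ≤ ∑ i ∈ s, max ((g i : ℝ) - a) 0 := by
  refine s.apply_sup_le_sum (f := fun x : NNReal => max ((x : ℝ) - a) 0) (by simp [ha]) ?_
  intro x y
  rcases le_total x y with hxy | hxy
  · simp [sup_eq_right.2 hxy]
  · simp [sup_eq_left.2 hxy]

lemma sum_le_sum_sum_of_support_subset {α ι : Type*} [Fintype α] [DecidableEq α]
    {f : α → ℝ} (hf : ∀ v, 0 ≤ f v) (s : Finset ι) (t : ι → Finset α)
    (hsupp : ∀ v, f v ≠ 0 → ∃ i ∈ s, v ∈ t i) :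
    ∑ v, f v ≤ ∑ i ∈ s, ∑ v ∈ t i, f v := by
  have hsum : ∑ v, f v = ∑ v ∈ s.sup t, f v := by
    refine (sum_subset (subset_univ _) fun v _ hv => ?_).symm
    by_contra hfv
    obtain ⟨i, hi, hvi⟩ := hsupp v hfv
    exact hv (mem_sup.2 ⟨i, hi, hvi⟩)
  rw [hsum]
  refine s.apply_sup_le_sum (f := fun T => ∑ v ∈ T, f v) sum_empty fun {A B} => ?_
  have hinter : 0 ≤ ∑ v ∈ A ∩ B, f v := sum_nonneg fun v _ => hf v
  rw [sup_eq_union]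
  linarith [sum_union_inter (s₁ := A) (s₂ := B) (f := f)]

theorem stmt16_general {ι : Type*}
    (c : Sym2 V → NNReal) (U : Finset V) (ℓ : V → ℝ)
    (hℓ : ∀ v, 0 ≤ ℓ v) (hℓ0 : ∀ v, v ∉ U → ℓ v = 0)
    (I' : Finset ι) (ends : ι → Finset V) (Imap : ι → Finset (Sym2 V)) (c' : ι → ℝ)
    (hIcov : ∀ e' ∈ I', ∀ v ∈ ends e', ∃ f ∈ Imap e', v ∈ f)
    (hc' : ∀ e' ∈ I', c' e' =
      (∑ v ∈ ends e', ℓ v) + ∑ v, max ((pw c (Imap e') v : ℝ) - ℓ v) 0)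
    (hcov : ∀ u ∈ U, ∃ e' ∈ I', u ∈ ends e')
    (I : Finset (Sym2 V)) (hI : I = I'.biUnion Imap)
    (π : V → ℝ) (hπ : ∀ v, π v = max ((pw c I v : ℝ)) (ℓ v)) :
    (∀ u ∈ U, ∃ e ∈ I, u ∈ e) ∧
      (∀ v ∈ U, ℓ v ≤ π v) ∧
      (∀ e ∈ I, ∀ v ∈ e, (c e : ℝ) ≤ π v) ∧
      ∑ v, π v ≤ ∑ e' ∈ I', c' e' := by
  subst hI
  refine ⟨fun u hu => ?_, fun v _ => hπ v ▸ le_max_right _ _,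
    fun e he v hv => hπ v ▸ le_max_of_le_left (by exact_mod_cast le_pw_of_mem c he hv), ?_⟩
  · obtain ⟨e', he', hue'⟩ := hcov u hu
    obtain ⟨f, hf, huf⟩ := hIcov e' he' u hue'
    exact ⟨f, mem_biUnion.2 ⟨e', he', hf⟩, huf⟩
  have hπ_split : ∀ v, π v = ℓ v + max ((pw c (I'.biUnion Imap) v : ℝ) - ℓ v) 0 := by
    intro v
    rw [hπ, add_comm, ← max_add_add_right, sub_add_cancel, zero_add]
  have hℓ_supp : ∀ v, ℓ v ≠ 0 → ∃ e' ∈ I', v ∈ ends e' := fun v hv =>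
    hcov v (by_contra fun hvU => hv (hℓ0 v hvU))
  calc ∑ v, π v
      = ∑ v, ℓ v + ∑ v, max ((pw c (I'.biUnion Imap) v : ℝ) - ℓ v) 0 := by
        simp only [hπ_split, sum_add_distrib]
    _ ≤ ∑ e' ∈ I', ∑ v ∈ ends e', ℓ v
          + ∑ v, ∑ e' ∈ I', max ((pw c (Imap e') v : ℝ) - ℓ v) 0 := by
        gcongr with v
        · exact sum_le_sum_sum_of_support_subset hℓ I' ends hℓ_supp
        · rw [pw_biUnion]
          exact max_sub_sup_le_sum I' _ (hℓ v)
    _ = ∑ e' ∈ I', c' e' := by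
        rw [sum_comm (s := univ), ← sum_add_distrib]
        exact sum_congr rfl fun e' he' => (hc' e' he').symm

/-- Reduction from Restricted Min-Power Edge-Cover to Min-Cost Edge-Cover (Lemma 6):
if `I'` is a `U`-cover in the auxiliary graph `G'` (edges `e'` with endpoint set
`ends e'\ ⊆ U`, underlying edge sets `Imap e' ⊆ E` covering `ends e'`, and cost
`c' e' = ∑_{v∈ends e'} ℓ v + D(Imap e')`), then `I = ⋃_{e'∈I'} Imap e'` covers `U` in `G`,
the assignment `π(v) = max{p_I(v), ℓ v}` is feasible (`π(v) ≥ ℓ v` on `U` and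
`π(u), π(v) ≥ c(uv)` for every `uv ∈ I`), and `π(V) ≤ c'(I')`. -/
theorem stmt16 {ι : Type*} [DecidableEq ι]
    (E : Finset (Sym2 V)) (c : Sym2 V → NNReal) (U : Finset V) (ℓ : V → ℝ)
    (hℓ : ∀ v, 0 ≤ ℓ v) (hℓ0 : ∀ v, v ∉ U → ℓ v = 0)
    (hℓmin : ∀ u ∈ U, ∃ e ∈ E, u ∈ e ∧ (c e : ℝ) ≤ ℓ u)
    (I' : Finset ι) (ends : ι → Finset V) (Imap : ι → Finset (Sym2 V)) (c' : ι → ℝ)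
    (hends : ∀ e' ∈ I', ends e' ⊆ U)
    (hsub : ∀ e' ∈ I', Imap e' ⊆ E)
    (hIcov : ∀ e' ∈ I', ∀ v ∈ ends e', ∃ f ∈ Imap e', v ∈ f)
    (hc' : ∀ e' ∈ I', c' e' =
      (∑ v ∈ ends e', ℓ v) + ∑ v, max ((pw c (Imap e') v : ℝ) - ℓ v) 0)
    (hcov : ∀ u ∈ U, ∃ e' ∈ I', u ∈ ends e')
    (I : Finset (Sym2 V)) (hI : I = I'.biUnion Imap)
    (π : V → ℝ) (hπ : ∀ v, π v = max ((pw c I v : ℝ)) (ℓ v)) :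
    (∀ u ∈ U, ∃ e ∈ I, u ∈ e) ∧
      (∀ v ∈ U, ℓ v ≤ π v) ∧
      (∀ e ∈ I, ∀ v ∈ e, (c e : ℝ) ≤ π v) ∧
      ∑ v, π v ≤ ∑ e' ∈ I', c' e' :=
  stmt16_general c U ℓ hℓ hℓ0 I' ends Imap c' hIcov hc' hcov I hI π hπ
end

section
/- Let I be a star in G with center v_0 and leaves v_1,…,v_d (d ≥ 1), ordered by nonincreasing cost of c(v_0 v_i), that covers U ∩ {v_0,…,v_d}, and let π(v) = max{p_I(v), ℓ_v}. Then there exists a U∩{v_0,…,v_d}-cover I' in the auxiliary graph G' with c'(I') ≤ (3/2)·∑_{i=0}^{d} π(v_i). -/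
open Finset

variable {V : Type*} [Fintype V] [DecidableEq V]

/-!
Pair the leaves consecutively through the center by type 3 edges: `v 1` with `v 2`, `v 3` with
`v 4`, …; when the center is in `U`, first join it to `v 1` by a type 2 edge and pair from `v 2` on.
Every end `y` of these edges costs at most `π y`, and the center, passed once per pair, costs at
most `c(v 0 v a)` for the pair starting at `v a`. As the costs are nonincreasing,
`2 c(v 0 v a) ≤ π (v (a - 1)) + π (v a)` (for `a = 1` because `v 0` sees the edge `v 0 v 1`), and
the windows `{a - 1, a}` are disjoint, so the passes through the center add at most `½ ∑ π`.
-/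

set_option linter.unusedSectionVars false

/-- The cost `c'` of an edge of `G'`: the `ℓ`-values of its ends plus `D` of its underlying
edges. -/
def auxCost (ℓ : V → ℝ) (c : Sym2 V → NNReal) (p : Finset V × Finset (Sym2 V)) : ℝ :=
  (∑ x ∈ p.1, ℓ x) + ∑ x, max ((pw c p.2 x : ℝ) - ℓ x) 0

/-- The edges of types 1, 2 and 3 of `G'`, each given by its set of ends and its underlying
edges. -/
def IsAuxEdge (E : Finset (Sym2 V)) (c : Sym2 V → NNReal) (U : Finset V)
    (p : Finset V × Finset (Sym2 V)) : Prop :=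
  (∃ u ∈ U, ∃ f ∈ E, p.1 = {u} ∧ p.2 = {f} ∧ u ∈ f ∧ ∀ g ∈ E, u ∈ g → c f ≤ c g) ∨
  (∃ u ∈ U, ∃ z ∈ U, u ≠ z ∧ s(u, z) ∈ E ∧ p.1 = {u, z} ∧ p.2 = {s(u, z)}) ∨
  (∃ u ∈ U, ∃ z ∈ U, ∃ x : V, s(u, x) ∈ E ∧ s(x, z) ∈ E ∧
    c s(x, z) ≤ c s(u, x) ∧ p.1 = {u, z} ∧ p.2 = {s(u, x), s(x, z)})

/-- The type 3 edge of `G'` joining `u` and `z` through the path `u x z`. -/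
def starPair (x u z : V) : Finset V × Finset (Sym2 V) := ({u, z}, {s(u, x), s(x, z)})

/-- Pairs up `v s, v (s + 1), …, v (s + n - 1)` consecutively through `x`; when `n` is odd the
last leaf is paired with itself. -/
def starPairs (x : V) (v : ℕ → V) : ℕ → ℕ → Finset (Finset V × Finset (Sym2 V))
  | _, 0 => ∅
  | s, 1 => {starPair x (v s) (v s)}
  | s, n + 2 => insert (starPair x (v s) (v (s + 1))) (starPairs x v (s + 2) n)

lemma exists_mem_starPairs (x : V) (v : ℕ → V) {n s j : ℕ} (hsj : s ≤ j) (hjn : j < s + n) :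
    ∃ p ∈ starPairs x v s n, v j ∈ p.1 := by
  induction n using Nat.twoStepInduction generalizing s with
  | zero => omega
  | one =>
    obtain rfl : j = s := by omega
    exact ⟨_, mem_singleton_self _, by simp [starPair]⟩
  | more n ih _ =>
    rw [starPairs]
    by_cases hj : j ≤ s + 1
    · refine ⟨_, mem_insert_self _ _, ?_⟩
      obtain rfl | rfl : j = s ∨ j = s + 1 := by omega
      all_goals simp [starPair]
    · obtain ⟨p, hp, hjp⟩ := ih (s := s + 2) (by omega) (by omega)
      exact ⟨p, mem_insert_of_mem hp, hjp⟩

lemma sum_insert_le_of_nonneg {α : Type*} [DecidableEq α] {f : α → ℝ} (hf : ∀ a, 0 ≤ f a)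
    (a : α) (s : Finset α) : ∑ x ∈ insert a s, f x ≤ f a + ∑ x ∈ s, f x := by
  by_cases h : a ∈ s
  · rw [insert_eq_of_mem h]
    linarith [hf a]
  · rw [sum_insert h]

lemma sum_Icc_eq_add_sum_Icc_succ (f : ℕ → ℝ) {a b : ℕ} (h : a ≤ b) :
    ∑ j ∈ Icc a b, f j = f a + ∑ j ∈ Icc (a + 1) b, f j := by
  rw [← insert_Icc_add_one_left_eq_Icc h, sum_insert (by simp)]

lemma sum_Icc_sub_one_eq (f : ℕ → ℝ) {a b : ℕ} (ha : 1 ≤ a) (hab : a ≤ b + 1) :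
    ∑ j ∈ Icc (a - 1) b, f j = f (a - 1) + ∑ j ∈ Icc a b, f j := by
  rw [sum_Icc_eq_add_sum_Icc_succ _ (by omega), Nat.sub_add_cancel ha]

section Power

variable {c : Sym2 V → NNReal} {J K : Finset (Sym2 V)} {y : V}

lemma le_pw {e : Sym2 V} (he : e ∈ J) (hy : y ∈ e) : c e ≤ pw c J y :=
  le_sup (mem_filter.mpr ⟨he, hy⟩)

lemma pw_mono (h : J ⊆ K) : pw c J y ≤ pw c K y :=
  sup_mono (filter_subset_filter _ h)

lemma pw_le_sup : pw c J y ≤ J.sup c :=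
  sup_mono (filter_subset _ _)

lemma pw_eq_zero_of_notMem (hy : ∀ e ∈ J, y ∉ e) : pw c J y = 0 := by
  rw [pw, inc, filter_false_of_mem hy, sup_empty, bot_eq_zero]

end Power

section Cost

variable {c : Sym2 V → NNReal} {ℓ : V → ℝ}

lemma auxCost_nonneg (hℓ : ∀ x, 0 ≤ ℓ x) (p : Finset V × Finset (Sym2 V)) :
    0 ≤ auxCost ℓ c p :=
  add_nonneg (sum_nonneg fun x _ => hℓ x) (sum_nonneg fun _ _ => le_max_right _ _)

/-- An endpoint `y` of an auxiliary edge pays `ℓ y + max (p_J y - ℓ y) 0 = max (p_J y) (ℓ y)`;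
every other node `y` pays at most `p_J y`. -/
lemma auxCost_le (hℓ : ∀ x, 0 ≤ ℓ x) {S T : Finset V} {J I : Finset (Sym2 V)} (hST : S ⊆ T)
    (hJT : ∀ e ∈ J, ∀ y ∈ e, y ∈ T) (hJI : J ⊆ I) :
    auxCost ℓ c (S, J) ≤ ∑ y ∈ S, max (pw c I y : ℝ) (ℓ y) + ∑ y ∈ T \ S, (pw c J y : ℝ) := by
  have hsupp : ∑ y, max ((pw c J y : ℝ) - ℓ y) 0 = ∑ y ∈ T, max ((pw c J y : ℝ) - ℓ y) 0 := by
    refine (sum_subset (subset_univ T) fun y _ hy => ?_).symm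
    rw [pw_eq_zero_of_notMem fun e he hye => hy (hJT e he y hye)]
    simp [hℓ y]
  rw [auxCost, hsupp, ← sum_sdiff hST, add_comm (∑ y ∈ T \ S, _), ← add_assoc,
    ← sum_add_distrib]
  refine add_le_add (sum_le_sum fun y _ => ?_) (sum_le_sum fun y _ => ?_)
  · calc ℓ y + max ((pw c J y : ℝ) - ℓ y) 0 = max (pw c J y : ℝ) (ℓ y) := by
          rw [← max_add_add_left]; simp
      _ ≤ max (pw c I y : ℝ) (ℓ y) := max_le_max_right _ (by exact_mod_cast pw_mono hJI)
  · exact max_le (by linarith [hℓ y]) (pw c J y).coe_nonneg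

lemma auxCost_edge_le (hℓ : ∀ x, 0 ≤ ℓ x) {u z : V} {I : Finset (Sym2 V)} (h : s(u, z) ∈ I) :
    auxCost ℓ c ({u, z}, {s(u, z)}) ≤ ∑ y ∈ {u, z}, max (pw c I y : ℝ) (ℓ y) := by
  have hJT : ∀ e ∈ ({s(u, z)} : Finset (Sym2 V)), ∀ y ∈ e, y ∈ ({u, z} : Finset V) := by
    simp
  simpa using auxCost_le hℓ subset_rfl hJT (singleton_subset_iff.mpr h)

lemma auxCost_starPair_le (hℓ : ∀ x, 0 ≤ ℓ x) {x u z : V} {I : Finset (Sym2 V)}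
    (hux : u ≠ x) (hzx : z ≠ x) (hc : c s(x, z) ≤ c s(u, x))
    (hI : ({s(u, x), s(x, z)} : Finset (Sym2 V)) ⊆ I) :
    auxCost ℓ c (starPair x u z) ≤ ∑ y ∈ {u, z}, max (pw c I y : ℝ) (ℓ y) + c s(u, x) := by
  have hJT : ∀ e ∈ (starPair x u z).2, ∀ y ∈ e, y ∈ insert x (starPair x u z).1 := by
    simp only [starPair, mem_insert, mem_singleton, forall_eq_or_imp, forall_eq, Sym2.mem_iff]
    tauto
  have hx : insert x {u, z} \ ({u, z} : Finset V) = {x} := by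
    ext y
    simp only [mem_sdiff, mem_insert, mem_singleton]
    constructor
    · tauto
    · rintro rfl
      exact ⟨Or.inl rfl, fun h => h.elim (fun h => hux h.symm) fun h => hzx h.symm⟩
  have hmid : pw c (starPair x u z).2 x ≤ c s(u, x) :=
    pw_le_sup.trans (by simp [starPair, hc])
  refine (auxCost_le hℓ (subset_insert x _) hJT hI).trans ?_
  rw [starPair, hx, sum_singleton]
  gcongr
  exact hmid

end Cost

section Star

variable {c : Sym2 V → NNReal} {ℓ : V → ℝ} {d : ℕ} {v : ℕ → V} {I : Finset (Sym2 V)}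
  {π : V → ℝ}

lemma pi_nonneg (hℓ : ∀ x, 0 ≤ ℓ x) (hπ : ∀ x, max (pw c I x : ℝ) (ℓ x) ≤ π x) (x : V) :
    0 ≤ π x :=
  (hℓ x).trans ((le_max_right _ _).trans (hπ x))

lemma coe_cost_le_of_mem (hI : ∀ i, 1 ≤ i → i ≤ d → s(v 0, v i) ∈ I)
    (hπ : ∀ x, max (pw c I x : ℝ) (ℓ x) ≤ π x) {i : ℕ} (h1 : 1 ≤ i) (h2 : i ≤ d) {y : V}
    (hy : y ∈ s(v 0, v i)) : (c s(v 0, v i) : ℝ) ≤ π y :=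
  (NNReal.coe_le_coe.mpr (le_pw (hI i h1 h2) hy)).trans ((le_max_left _ _).trans (hπ y))

lemma coe_cost_le_pred (hmono : ∀ i j, 1 ≤ i → i ≤ j → j ≤ d → c s(v 0, v j) ≤ c s(v 0, v i))
    (hI : ∀ i, 1 ≤ i → i ≤ d → s(v 0, v i) ∈ I)
    (hπ : ∀ x, max (pw c I x : ℝ) (ℓ x) ≤ π x) {i : ℕ} (h1 : 1 ≤ i) (h2 : i ≤ d) :
    (c s(v 0, v i) : ℝ) ≤ π (v (i - 1)) := by
  obtain rfl | h1 := h1.eq_or_lt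
  · exact coe_cost_le_of_mem hI hπ le_rfl h2 (Sym2.mem_mk_left _ _)
  · calc (c s(v 0, v i) : ℝ) ≤ c s(v 0, v (i - 1)) :=
          NNReal.coe_le_coe.mpr (hmono _ _ (by omega) (by omega) h2)
      _ ≤ π (v (i - 1)) := coe_cost_le_of_mem hI hπ (by omega) (by omega) (Sym2.mem_mk_right _ _)

lemma two_mul_coe_cost_le (hmono : ∀ i j, 1 ≤ i → i ≤ j → j ≤ d → c s(v 0, v j) ≤ c s(v 0, v i))
    (hI : ∀ i, 1 ≤ i → i ≤ d → s(v 0, v i) ∈ I)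
    (hπ : ∀ x, max (pw c I x : ℝ) (ℓ x) ≤ π x) {i : ℕ} (h1 : 1 ≤ i) (h2 : i ≤ d) :
    2 * (c s(v 0, v i) : ℝ) ≤ π (v (i - 1)) + π (v i) := by
  linarith [coe_cost_le_pred hmono hI hπ h1 h2,
    coe_cost_le_of_mem hI hπ h1 h2 (Sym2.mem_mk_right _ _)]

lemma auxCost_starPair_leaves_le (hℓ : ∀ x, 0 ≤ ℓ x)
    (hinj : ∀ i j, i ≤ d → j ≤ d → v i = v j → i = j)
    (hmono : ∀ i j, 1 ≤ i → i ≤ j → j ≤ d → c s(v 0, v j) ≤ c s(v 0, v i))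
    (hI : ∀ i, 1 ≤ i → i ≤ d → s(v 0, v i) ∈ I)
    (hπ : ∀ x, max (pw c I x : ℝ) (ℓ x) ≤ π x) {a b : ℕ} (ha : 1 ≤ a) (hab : a ≤ b) (hb : b ≤ d) :
    auxCost ℓ c (starPair (v 0) (v a) (v b)) ≤ ∑ y ∈ {v a, v b}, π y + c s(v 0, v a) := by
  have hne : ∀ j, 1 ≤ j → j ≤ d → v j ≠ v 0 := fun j hj hjd h => by
    have := hinj j 0 hjd (Nat.zero_le d) h
    omega
  rw [Sym2.eq_swap (a := v 0)]
  refine (auxCost_starPair_le hℓ (hne a ha (hab.trans hb)) (hne b (ha.trans hab) hb) ?_ ?_).trans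
    (add_le_add_left (sum_le_sum fun y _ => hπ y) _)
  · rw [Sym2.eq_swap (a := v a)]
    exact hmono a b ha hab hb
  · rw [insert_subset_iff, singleton_subset_iff, Sym2.eq_swap (a := v a)]
    exact ⟨hI a ha (hab.trans hb), hI b (ha.trans hab) hb⟩

lemma isAuxEdge_starPair_leaves {E : Finset (Sym2 V)} {U : Finset V}
    (hE : ∀ i, 1 ≤ i → i ≤ d → s(v 0, v i) ∈ E) (hleaves : ∀ i, 1 ≤ i → i ≤ d → v i ∈ U)
    (hmono : ∀ i j, 1 ≤ i → i ≤ j → j ≤ d → c s(v 0, v j) ≤ c s(v 0, v i))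
    {a b : ℕ} (ha : 1 ≤ a) (hab : a ≤ b) (hb : b ≤ d) :
    IsAuxEdge E c U (starPair (v 0) (v a) (v b)) := by
  refine Or.inr <| Or.inr ⟨v a, hleaves a ha (hab.trans hb), v b, hleaves b (ha.trans hab) hb,
    v 0, ?_, hE b (ha.trans hab) hb, ?_, rfl, rfl⟩ <;> rw [Sym2.eq_swap (a := v a)]
  · exact hE a ha (hab.trans hb)
  · exact hmono a b ha hab hb

lemma isAuxEdge_of_mem_starPairs {E : Finset (Sym2 V)} {U : Finset V}
    (hE : ∀ i, 1 ≤ i → i ≤ d → s(v 0, v i) ∈ E) (hleaves : ∀ i, 1 ≤ i → i ≤ d → v i ∈ U)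
    (hmono : ∀ i j, 1 ≤ i → i ≤ j → j ≤ d → c s(v 0, v j) ≤ c s(v 0, v i))
    {n s : ℕ} (hs : 1 ≤ s) (hn : s + n ≤ d + 1) :
    ∀ p ∈ starPairs (v 0) v s n, IsAuxEdge E c U p := by
  induction n using Nat.twoStepInduction generalizing s with
  | zero => simp [starPairs]
  | one =>
    simp only [starPairs, mem_singleton, forall_eq]
    exact isAuxEdge_starPair_leaves hE hleaves hmono hs le_rfl (by omega)
  | more n ih _ =>
    rw [starPairs, forall_mem_insert]
    exact ⟨isAuxEdge_starPair_leaves hE hleaves hmono hs (by omega) (by omega),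
      ih (by omega) (by omega)⟩

lemma sum_auxCost_starPairs_le (hℓ : ∀ x, 0 ≤ ℓ x)
    (hinj : ∀ i j, i ≤ d → j ≤ d → v i = v j → i = j)
    (hmono : ∀ i j, 1 ≤ i → i ≤ j → j ≤ d → c s(v 0, v j) ≤ c s(v 0, v i))
    (hI : ∀ i, 1 ≤ i → i ≤ d → s(v 0, v i) ∈ I)
    (hπ : ∀ x, max (pw c I x : ℝ) (ℓ x) ≤ π x) {n s : ℕ} (hs : 1 ≤ s) (hn : s + n = d + 1) :
    ∑ p ∈ starPairs (v 0) v s n, auxCost ℓ c p ≤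
      ∑ j ∈ Icc s d, π (v j) + (1 / 2) * ∑ j ∈ Icc (s - 1) d, π (v j) := by
  induction n using Nat.twoStepInduction generalizing s with
  | zero =>
    rw [starPairs, sum_empty, Icc_eq_empty (by omega), sum_empty, zero_add]
    exact mul_nonneg (by norm_num) (sum_nonneg fun j _ => pi_nonneg hℓ hπ _)
  | one =>
    obtain rfl : s = d := by omega
    have hcost := auxCost_starPair_leaves_le hℓ hinj hmono hI hπ hs le_rfl le_rfl
    rw [pair_eq_singleton, sum_singleton] at hcost
    rw [sum_Icc_sub_one_eq _ hs (by omega), starPairs, sum_singleton, Icc_self, sum_singleton]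
    linarith [two_mul_coe_cost_le hmono hI hπ hs le_rfl]
  | more n ih _ =>
    have hne : v s ≠ v (s + 1) := fun h => by
      have := hinj _ _ (by omega) (by omega) h
      omega
    have hcost :=
      auxCost_starPair_leaves_le hℓ hinj hmono hI hπ hs (b := s + 1) (by omega) (by omega)
    have hrest := ih (s := s + 2) (by omega) (by omega)
    rw [sum_pair hne] at hcost
    rw [show s + 2 - 1 = s + 1 by omega] at hrest
    rw [starPairs, sum_Icc_sub_one_eq _ hs (by omega),
      sum_Icc_eq_add_sum_Icc_succ _ (by omega : s ≤ d),
      sum_Icc_eq_add_sum_Icc_succ _ (by omega : s + 1 ≤ d)]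
    rw [sum_Icc_eq_add_sum_Icc_succ _ (by omega : s + 1 ≤ d)] at hrest
    linarith [two_mul_coe_cost_le hmono hI hπ hs (by omega),
      sum_insert_le_of_nonneg (auxCost_nonneg (c := c) hℓ) (starPair (v 0) (v s) (v (s + 1)))
        (starPairs (v 0) v (s + 2) n)]

lemma exists_cover_of_center_mem {E : Finset (Sym2 V)} {U : Finset V} (h0 : v 0 ∈ U)
    (hd : 1 ≤ d) (hℓ : ∀ x, 0 ≤ ℓ x) (hinj : ∀ i j, i ≤ d → j ≤ d → v i = v j → i = j)
    (hmono : ∀ i j, 1 ≤ i → i ≤ j → j ≤ d → c s(v 0, v j) ≤ c s(v 0, v i))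
    (hE : ∀ i, 1 ≤ i → i ≤ d → s(v 0, v i) ∈ E) (hleaves : ∀ i, 1 ≤ i → i ≤ d → v i ∈ U)
    (hI : ∀ i, 1 ≤ i → i ≤ d → s(v 0, v i) ∈ I) (hπ : ∀ x, max (pw c I x : ℝ) (ℓ x) ≤ π x) :
    ∃ P : Finset (Finset V × Finset (Sym2 V)), (∀ p ∈ P, IsAuxEdge E c U p) ∧
      (∀ j ≤ d, ∃ p ∈ P, v j ∈ p.1) ∧
      ∑ p ∈ P, auxCost ℓ c p ≤ ∑ j ∈ Icc 0 d, π (v j) + (1 / 2) * ∑ j ∈ Icc 1 d, π (v j) := by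
  have hne : v 0 ≠ v 1 := fun h => by have := hinj 0 1 (by omega) hd h; omega
  refine ⟨insert ({v 0, v 1}, {s(v 0, v 1)}) (starPairs (v 0) v 2 (d - 1)),
    forall_mem_insert _ _ _ |>.mpr
      ⟨Or.inr (Or.inl ⟨v 0, h0, v 1, hleaves 1 le_rfl hd, hne, hE 1 le_rfl hd, rfl, rfl⟩),
        isAuxEdge_of_mem_starPairs hE hleaves hmono (by omega) (by omega)⟩, fun j hj => ?_, ?_⟩
  · obtain hj1 | hj2 := le_or_gt j 1
    · exact ⟨_, mem_insert_self _ _, by interval_cases j <;> simp⟩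
    · obtain ⟨p, hp, hjp⟩ := exists_mem_starPairs (v 0) v (n := d - 1) hj2 (by omega)
      exact ⟨p, mem_insert_of_mem hp, hjp⟩
  · have hhead := (auxCost_edge_le hℓ (hI 1 le_rfl hd)).trans (sum_le_sum fun y _ => hπ y)
    have hrest := sum_auxCost_starPairs_le hℓ hinj hmono hI hπ (n := d - 1) (s := 2)
      (by omega) (by omega)
    rw [sum_pair hne] at hhead
    rw [show 2 - 1 = 1 from rfl] at hrest
    have hsplit0 : ∑ j ∈ Icc 0 d, π (v j) = π (v 0) + ∑ j ∈ Icc 1 d, π (v j) :=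
      sum_Icc_eq_add_sum_Icc_succ _ d.zero_le
    have hsplit1 : ∑ j ∈ Icc 1 d, π (v j) = π (v 1) + ∑ j ∈ Icc 2 d, π (v j) :=
      sum_Icc_eq_add_sum_Icc_succ _ hd
    linarith [sum_insert_le_of_nonneg (auxCost_nonneg (c := c) hℓ) ({v 0, v 1}, {s(v 0, v 1)})
      (starPairs (v 0) v 2 (d - 1))]

end Star

theorem stmt17_general (E : Finset (Sym2 V)) (c : Sym2 V → NNReal) (U : Finset V) (ℓ : V → ℝ)
    (hℓ : ∀ x, 0 ≤ ℓ x)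
    (d : ℕ) (hd : 1 ≤ d) (v : ℕ → V)
    (hinj : ∀ i j, i ≤ d → j ≤ d → v i = v j → i = j)
    (hE : ∀ i, 1 ≤ i → i ≤ d → s(v 0, v i) ∈ E)
    (hleaves : ∀ i, 1 ≤ i → i ≤ d → v i ∈ U)
    (hmono : ∀ i j, 1 ≤ i → i ≤ j → j ≤ d → c s(v 0, v j) ≤ c s(v 0, v i))
    (I : Finset (Sym2 V)) (hI : I = (Finset.Icc 1 d).image (fun i => s(v 0, v i)))
    (π : V → ℝ) (hπ : ∀ x, π x = max ((pw c I x : ℝ)) (ℓ x)) :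
    ∃ I'' : Finset (Finset V × Finset (Sym2 V)),
      (∀ p ∈ I'',
        (∃ u ∈ U, ∃ f ∈ E, p.1 = {u} ∧ p.2 = {f} ∧ u ∈ f ∧
          ∀ g ∈ E, u ∈ g → c f ≤ c g) ∨
        (∃ u ∈ U, ∃ z ∈ U, u ≠ z ∧ s(u, z) ∈ E ∧ p.1 = {u, z} ∧ p.2 = {s(u, z)}) ∨
        (∃ u ∈ U, ∃ z ∈ U, ∃ x : V, s(u, x) ∈ E ∧ s(x, z) ∈ E ∧
          c s(x, z) ≤ c s(u, x) ∧ p.1 = {u, z} ∧ p.2 = {s(u, x), s(x, z)})) ∧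
      (∀ x ∈ U, (∃ i ≤ d, x = v i) → ∃ p ∈ I'', x ∈ p.1) ∧
      ∑ p ∈ I'', ((∑ x ∈ p.1, ℓ x) + ∑ x, max ((pw c p.2 x : ℝ) - ℓ x) 0) ≤
        (3 / 2) * ∑ i ∈ Finset.range (d + 1), π (v i) := by
  suffices ∃ I'' : Finset (Finset V × Finset (Sym2 V)), (∀ p ∈ I'', IsAuxEdge E c U p) ∧
      (∀ x ∈ U, (∃ i ≤ d, x = v i) → ∃ p ∈ I'', x ∈ p.1) ∧
      ∑ p ∈ I'', auxCost ℓ c p ≤ (3 / 2) * ∑ i ∈ range (d + 1), π (v i) from this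
  have hIv : ∀ i, 1 ≤ i → i ≤ d → s(v 0, v i) ∈ I := fun i h1 h2 =>
    hI ▸ mem_image_of_mem _ (mem_Icc.mpr ⟨h1, h2⟩)
  have hπle : ∀ x, max (pw c I x : ℝ) (ℓ x) ≤ π x := fun x => (hπ x).ge
  have hrange : ∑ i ∈ range (d + 1), π (v i) = ∑ j ∈ Icc 0 d, π (v j) := by
    rw [Nat.range_eq_Icc_zero_sub_one _ d.add_one_ne_zero, Nat.add_sub_cancel]
  have hsplit0 : ∑ j ∈ Icc 0 d, π (v j) = π (v 0) + ∑ j ∈ Icc 1 d, π (v j) :=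
    sum_Icc_eq_add_sum_Icc_succ _ d.zero_le
  have hπ0 := pi_nonneg hℓ hπle (v 0)
  have hπsum := sum_nonneg fun j (_ : j ∈ Icc 1 d) => pi_nonneg hℓ hπle (v j)
  by_cases h0 : v 0 ∈ U
  · obtain ⟨P, hPaux, hPcover, hPcost⟩ :=
      exists_cover_of_center_mem h0 hd hℓ hinj hmono hE hleaves hIv hπle
    refine ⟨P, hPaux, fun x _ ⟨i, hi, hx⟩ => hx ▸ hPcover i hi, ?_⟩
    rw [hrange]
    linarith
  · refine ⟨starPairs (v 0) v 1 d, isAuxEdge_of_mem_starPairs hE hleaves hmono le_rfl (by omega),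
      fun x hx ⟨i, hi, hxi⟩ => ?_, ?_⟩
    · subst hxi
      exact exists_mem_starPairs (v 0) v (Nat.one_le_iff_ne_zero.mpr fun h => h0 (h ▸ hx))
        (by omega)
    · have hrest := sum_auxCost_starPairs_le hℓ hinj hmono hIv hπle (n := d) le_rfl (by omega)
      rw [Nat.sub_self] at hrest
      rw [hrange]
      linarith

/-- The star lemma (Lemma 8): for a star `I` with center `v 0` and leaves `v 1, …, v d`
(ordered by nonincreasing cost, all leaves in `U`) and `π(x) = max{p_I(x), ℓ x}`, there is
a cover `I'` of `U ∩ {v 0, …, v d}` in the auxiliary graph `G'` — consisting of type 1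
(loop at a node with a cheapest incident edge), type 2 and type 3 edges, each represented
by its endpoint set together with its underlying edge set, and of cost
`∑_{x∈ends} ℓ x + D(underlying edges)` — with `c'(I') ≤ (3/2)·∑_{i=0}^d π(v i)`. -/
theorem stmt17 (E : Finset (Sym2 V)) (c : Sym2 V → NNReal) (U : Finset V) (ℓ : V → ℝ)
    (hℓ : ∀ x, 0 ≤ ℓ x) (hℓ0 : ∀ x, x ∉ U → ℓ x = 0)
    (hℓmin : ∀ u ∈ U, ∃ e ∈ E, u ∈ e ∧ (c e : ℝ) ≤ ℓ u)
    (hsimple : ∀ e ∈ E, ¬ e.IsDiag)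
    (d : ℕ) (hd : 1 ≤ d) (v : ℕ → V)
    (hinj : ∀ i j, i ≤ d → j ≤ d → v i = v j → i = j)
    (hE : ∀ i, 1 ≤ i → i ≤ d → s(v 0, v i) ∈ E)
    (hleaves : ∀ i, 1 ≤ i → i ≤ d → v i ∈ U)
    (hmono : ∀ i j, 1 ≤ i → i ≤ j → j ≤ d → c s(v 0, v j) ≤ c s(v 0, v i))
    (I : Finset (Sym2 V)) (hI : I = (Finset.Icc 1 d).image (fun i => s(v 0, v i)))
    (π : V → ℝ) (hπ : ∀ x, π x = max ((pw c I x : ℝ)) (ℓ x)) :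
    ∃ I'' : Finset (Finset V × Finset (Sym2 V)),
      (∀ p ∈ I'',
        (∃ u ∈ U, ∃ f ∈ E, p.1 = {u} ∧ p.2 = {f} ∧ u ∈ f ∧
          ∀ g ∈ E, u ∈ g → c f ≤ c g) ∨
        (∃ u ∈ U, ∃ z ∈ U, u ≠ z ∧ s(u, z) ∈ E ∧ p.1 = {u, z} ∧ p.2 = {s(u, z)}) ∨
        (∃ u ∈ U, ∃ z ∈ U, ∃ x : V, s(u, x) ∈ E ∧ s(x, z) ∈ E ∧
          c s(x, z) ≤ c s(u, x) ∧ p.1 = {u, z} ∧ p.2 = {s(u, x), s(x, z)})) ∧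
      (∀ x ∈ U, (∃ i ≤ d, x = v i) → ∃ p ∈ I'', x ∈ p.1) ∧
      ∑ p ∈ I'', ((∑ x ∈ p.1, ℓ x) + ∑ x, max ((pw c p.2 x : ℝ) - ℓ x) 0) ≤
        (3 / 2) * ∑ i ∈ Finset.range (d + 1), π (v i) :=
  stmt17_general E c U ℓ hℓ d hd v hinj hE hleaves hmono I hI π hπ
end

section
/- Given an instance of MPEMC on graph G=(V,E), construct the bipartite instance on A = {a_v : v∈V}, B = {b_v : v∈V} by replacing each edge uv ∈ E with edges a_u b_v and a_v b_u of cost c(uv), setting r(b_v) = r(v) and r(a_v) = 0. Then: (i) for any r-edge cover J of G, the corresponding bipartite edge set has power at most 2·p_J(V); (ii) for any feasible bipartite solution J', the set J = {uv : a_u b_v ∈ J' or a_v b_u ∈ J'} is an r-edge cover of G with p_J(V) ≤ p_{J'}(A∪B). Hence a ρ-approximation for bipartite MPEMC gives a 2ρ-approximation for MPEMC. -/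
/-!
The bipartite copy of an edge set has, at each `a_v` and at each `b_v`, exactly the incident edges
of `v` (read through `(u, w) ↦ s(u, w)`), so its degrees at `B` and its powers at `A` and at `B`
are those of the original; summing over both sides doubles the power. Conversely every edge
`uv` of the graph read off a bipartite solution `J'` comes from some `a_u b_v ∈ J'`, whose cost
is charged to `a_u` if the node is `u` and to `b_v` if it is `v`; and distinct edges `a_u b_v`
at a fixed `b_v` give distinct edges `uv`.
-/

open Finset

variable {V : Type*} [Fintype V] [DecidableEq V]

/-- The power of the copy `a_u` of `u` in side `A` w.r.t. a bipartite edge set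
`J' ⊆ V × V` (the pair `(u, v)` represents the bipartite edge `a_u b_v` of cost
`c s(u, v)`). -/
def bpowA (c : Sym2 V → NNReal) (J' : Finset (V × V)) (u : V) : NNReal :=
  (J'.filter (fun p => p.1 = u)).sup (fun p => c s(p.1, p.2))

/-- The power of the copy `b_v` of `v` in side `B` w.r.t. a bipartite edge set. -/
def bpowB (c : Sym2 V → NNReal) (J' : Finset (V × V)) (v : V) : NNReal :=
  (J'.filter (fun p => p.2 = v)).sup (fun p => c s(p.1, p.2))

/-- The degree of the copy `b_v` in a bipartite edge set. -/
def bdegB (J' : Finset (V × V)) (v : V) : ℕ := (J'.filter (fun p => p.2 = v)).card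

/-- The bipartite edge set corresponding to an edge set `J`: each edge `uv` is replaced by
`a_u b_v` and `a_v b_u`. -/
def toBip (J : Finset (Sym2 V)) : Finset (V × V) :=
  (Finset.univ ×ˢ Finset.univ).filter (fun p => s(p.1, p.2) ∈ J)

/-- The edge set of `G` corresponding to a bipartite edge set `J'`. -/
def toSimple (E : Finset (Sym2 V)) (J' : Finset (V × V)) : Finset (Sym2 V) :=
  E.filter (fun e => ∃ p ∈ J', e = s(p.1, p.2))

lemma Sym2.mk_injOn_snd_eq {α : Type*} (v : α) :
    Set.InjOn (fun p : α × α => s(p.1, p.2)) {p | p.2 = v} := by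
  rintro ⟨a, b⟩ (rfl : b = v) ⟨a', b'⟩ (rfl : b' = b) h
  exact Prod.ext (Sym2.congr_left.1 h) rfl

lemma Sym2.mk_injOn_fst_eq {α : Type*} (u : α) :
    Set.InjOn (fun p : α × α => s(p.1, p.2)) {p | p.1 = u} := by
  rintro ⟨a, b⟩ (rfl : a = u) ⟨a', b'⟩ (rfl : a' = a) h
  exact Prod.ext rfl (Sym2.congr_right.1 h)

lemma mem_toBip {J : Finset (Sym2 V)} {p : V × V} : p ∈ toBip J ↔ s(p.1, p.2) ∈ J := by
  simp [toBip]

lemma image_filter_fst_toBip (J : Finset (Sym2 V)) (u : V) :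
    ((toBip J).filter (fun p => p.1 = u)).image (fun p => s(p.1, p.2)) = inc J u := by
  ext e
  simp only [mem_image, mem_filter, mem_toBip, inc]
  constructor
  · rintro ⟨p, ⟨hp, rfl⟩, rfl⟩
    exact ⟨hp, Sym2.mem_mk_left _ _⟩
  · rintro ⟨he, hu⟩
    exact ⟨(u, Sym2.Mem.other' hu), by simp [Sym2.other_spec', he]⟩

lemma image_filter_snd_toBip (J : Finset (Sym2 V)) (v : V) :
    ((toBip J).filter (fun p => p.2 = v)).image (fun p => s(p.1, p.2)) = inc J v := by
  ext e
  simp only [mem_image, mem_filter, mem_toBip, inc]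
  constructor
  · rintro ⟨p, ⟨hp, rfl⟩, rfl⟩
    exact ⟨hp, Sym2.mem_mk_right _ _⟩
  · rintro ⟨he, hv⟩
    exact ⟨(Sym2.Mem.other' hv, v), by simp [Sym2.eq_swap, Sym2.other_spec', he]⟩

lemma bdegB_toBip (J : Finset (Sym2 V)) (v : V) : bdegB (toBip J) v = deg J v := by
  rw [deg, ← image_filter_snd_toBip, card_image_of_injOn]
  · rfl
  · exact (Sym2.mk_injOn_snd_eq v).mono fun p hp => (mem_filter.1 hp).2

lemma bpowA_toBip (c : Sym2 V → NNReal) (J : Finset (Sym2 V)) (u : V) :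
    bpowA c (toBip J) u = pw c J u := by
  rw [pw, ← image_filter_fst_toBip, sup_image]
  rfl

lemma bpowB_toBip (c : Sym2 V → NNReal) (J : Finset (Sym2 V)) (v : V) :
    bpowB c (toBip J) v = pw c J v := by
  rw [pw, ← image_filter_snd_toBip, sup_image]
  rfl

lemma bdegB_le_deg_toSimple {E : Finset (Sym2 V)} {J' : Finset (V × V)} (hJ' : J' ⊆ toBip E)
    (v : V) : bdegB J' v ≤ deg (toSimple E J') v := by
  refine card_le_card_of_injOn (fun p => s(p.1, p.2)) ?_
    ((Sym2.mk_injOn_snd_eq v).mono fun p hp => (mem_filter.1 hp).2)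
  rintro p hp
  obtain ⟨hpJ', rfl⟩ := mem_filter.1 hp
  simp only [coe_filter, inc, toSimple, mem_filter, Set.mem_ofPred_eq]
  exact ⟨⟨mem_toBip.1 (hJ' hpJ'), p, hpJ', rfl⟩, Sym2.mem_mk_right _ _⟩

omit [Fintype V] in
lemma pw_toSimple_le (c : Sym2 V → NNReal) (E : Finset (Sym2 V)) (J' : Finset (V × V)) (v : V) :
    pw c (toSimple E J') v ≤ bpowA c J' v + bpowB c J' v := by
  refine Finset.sup_le fun e he => ?_
  obtain ⟨⟨-, p, hpJ', rfl⟩, hv⟩ := by simpa only [inc, toSimple, mem_filter] using he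
  rcases Sym2.mem_iff.1 hv with rfl | rfl
  · exact le_add_right (le_sup (f := fun p : V × V => c s(p.1, p.2)) (mem_filter.2 ⟨hpJ', rfl⟩))
  · exact le_add_left (le_sup (f := fun p : V × V => c s(p.1, p.2)) (mem_filter.2 ⟨hpJ', rfl⟩))

theorem stmt19_general (E : Finset (Sym2 V)) (c : Sym2 V → NNReal) (r : V → ℕ) :
    (∀ J ⊆ E, (∀ v, r v ≤ deg J v) →
      (∀ v, r v ≤ bdegB (toBip J) v) ∧
        (∑ u, bpowA c (toBip J) u) + ∑ v, bpowB c (toBip J) v ≤ 2 * ∑ v, pw c J v) ∧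
      ∀ J' ⊆ toBip E, (∀ v, r v ≤ bdegB J' v) →
        (∀ v, r v ≤ deg (toSimple E J') v) ∧
          ∑ v, pw c (toSimple E J') v ≤ (∑ u, bpowA c J' u) + ∑ v, bpowB c J' v := by
  refine ⟨fun J _ hcover => ⟨fun v => ?_, ?_⟩, fun J' hJ' hcover => ⟨fun v => ?_, ?_⟩⟩
  · simpa only [bdegB_toBip] using hcover v
  · simp only [bpowA_toBip, bpowB_toBip, two_mul, le_refl]
  · exact (hcover v).trans (bdegB_le_deg_toSimple hJ' v)
  · rw [← sum_add_distrib]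
    exact sum_le_sum fun v _ => pw_toSimple_le c E J' v

/-- The bipartite reduction for MPEMC: (i) for any `r`-edge cover `J` of `G`, the
corresponding bipartite edge set is a feasible bipartite solution of power at most
`2·p_J(V)`; (ii) for any feasible bipartite solution `J'`, the corresponding edge set of
`G` is an `r`-edge cover of power at most the bipartite power of `J'`. Hence a
`ρ`-approximation for bipartite MPEMC gives a `2ρ`-approximation for MPEMC. -/
theorem stmt19 (E : Finset (Sym2 V)) (c : Sym2 V → NNReal) (r : V → ℕ)
    (hsimple : ∀ e ∈ E, ¬ e.IsDiag) :
    (∀ J ⊆ E, (∀ v, r v ≤ deg J v) →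
      (∀ v, r v ≤ bdegB (toBip J) v) ∧
        (∑ u, bpowA c (toBip J) u) + ∑ v, bpowB c (toBip J) v ≤ 2 * ∑ v, pw c J v) ∧
      ∀ J' ⊆ toBip E, (∀ v, r v ≤ bdegB J' v) →
        (∀ v, r v ≤ deg (toSimple E J') v) ∧
          ∑ v, pw c (toSimple E J') v ≤ (∑ u, bpowA c J' u) + ∑ v, bpowB c J' v :=
  stmt19_general E c r
end
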